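/- Suppose 0 ≤ ω ≤ n(δ₂ − δ₁) and 0 ≤ ω̃ ≤ n(δ̃₂ − δ̃₁). Then 𝒢(δ₁, δ₂; ω) = 𝒢(δ̃₁, δ̃₂; ω̃) if and only if δ₁ = δ̃₁, δ₂ = δ̃₂, and ω = ω̃. -/

import Mathlib

open MeasureTheory
open scoped BigOperators ENNReal

/-- A dyadic cube `2^{-j}([0,1)^n + k)` in `ℝⁿ`, encoded by its generation `j`
and its position `k`. -/
structure DyadicCube (n : ℕ) where
  j : ℤ
  k : Fin n → ℤ
deriving DecidableEq

namespace DyadicCube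

variable {n : ℕ}

/-- The side length `ℓ(Q) = 2^{-j}`. -/
noncomputable def len (Q : DyadicCube n) : ℝ := (2 : ℝ) ^ (-Q.j)

/-- The lower-left corner `x_Q = 2^{-j} k`. -/
noncomputable def corner (Q : DyadicCube n) (i : Fin n) : ℝ := (2 : ℝ) ^ (-Q.j) * Q.k i

/-- The volume `|Q| = 2^{-jn}`. -/
noncomputable def vol (Q : DyadicCube n) : ℝ := Q.len ^ (n : ℕ)

/-- The cube `Q` as a subset of `ℝⁿ`. -/
noncomputable def toSet (Q : DyadicCube n) : Set (Fin n → ℝ) :=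
  {x | ∀ i, Q.corner i ≤ x i ∧ x i < Q.corner i + Q.len}

/-- The Euclidean distance `|x_Q - x_R|` between the corners of two dyadic cubes. -/
noncomputable def cdist (Q R : DyadicCube n) : ℝ :=
  Real.sqrt (∑ i, (Q.corner i - R.corner i) ^ 2)

end DyadicCube

/-- `υ : 𝒟 → (0,∞)` is a `(δ₁, δ₂; ω)`-order growth function: it is positive and
`υ(Q)/υ(R) ≤ C (1 + |x_Q - x_R|/(ℓ(Q) ∨ ℓ(R)))^ω (|Q|/|R|)^{δ₁}` when `ℓ(Q) ≤ ℓ(R)`,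
with exponent `δ₂` in place of `δ₁` when `ℓ(R) < ℓ(Q)`. -/
def IsGrowthFunction (n : ℕ) (δ₁ δ₂ ω : ℝ) (υ : DyadicCube n → ℝ) : Prop :=
  (∀ Q, 0 < υ Q) ∧ ∃ C : ℝ, 0 < C ∧ ∀ Q R : DyadicCube n,
    υ Q / υ R ≤ C * (1 + Q.cdist R / max Q.len R.len) ^ ω *
      (if Q.len ≤ R.len then (Q.vol / R.vol) ^ δ₁ else (Q.vol / R.vol) ^ δ₂)

namespace DyadicCube
variable {n : ℕ}
lemma len_pos (Q : DyadicCube n) : 0 < Q.len := zpow_pos (by norm_num) _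
lemma vol_pos (Q : DyadicCube n) : 0 < Q.vol := pow_pos Q.len_pos n
lemma cdist_nonneg (Q R : DyadicCube n) : 0 ≤ Q.cdist R := Real.sqrt_nonneg _
end DyadicCube

namespace GrowthAux
open DyadicCube
variable {n : ℕ}

noncomputable def toE (Q : DyadicCube n) : EuclideanSpace ℝ (Fin n) :=
  (WithLp.equiv 2 (Fin n → ℝ)).symm Q.corner

lemma cdist_eq_norm (Q R : DyadicCube n) : Q.cdist R = ‖toE Q - toE R‖ := by
  rw [EuclideanSpace.norm_eq]
  unfold DyadicCube.cdist
  congr 1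
  refine Finset.sum_congr rfl fun i _ => ?_
  rw [show (toE Q - toE R) i = Q.corner i - R.corner i from rfl, Real.norm_eq_abs, sq_abs]

/-- the centered cube of generation j -/
def cz (n : ℕ) (j : ℤ) : DyadicCube n := ⟨j, fun _ => 0⟩

lemma corner_cz (j : ℤ) (i : Fin n) : (cz n j).corner i = 0 := by simp [cz, corner]

noncomputable def nx (Q : DyadicCube n) : ℝ := Q.cdist (cz n 0)

lemma nx_nonneg (Q : DyadicCube n) : 0 ≤ nx Q := Q.cdist_nonneg _

lemma nx_eq_norm (Q : DyadicCube n) : nx Q = ‖toE Q‖ := by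
  rw [EuclideanSpace.norm_eq]
  unfold nx DyadicCube.cdist
  congr 1
  refine Finset.sum_congr rfl fun i _ => ?_
  rw [corner_cz, sub_zero, show (toE Q) i = Q.corner i from rfl, Real.norm_eq_abs, sq_abs]

lemma nx_le (Q R : DyadicCube n) : nx Q ≤ nx R + Q.cdist R := by
  rw [nx_eq_norm, nx_eq_norm, cdist_eq_norm]
  calc ‖toE Q‖ = ‖toE R + (toE Q - toE R)‖ := by rw [show toE R + (toE Q - toE R) = toE Q from by abel]
  _ ≤ ‖toE R‖ + ‖toE Q - toE R‖ := norm_add_le _ _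

lemma cdist_cz (a b : ℤ) : (cz n a).cdist (cz n b) = 0 := by
  simp [DyadicCube.cdist, corner_cz]

lemma len_cz (j : ℤ) : (cz n j).len = (2:ℝ) ^ (-j) := rfl

lemma vol_cz (j : ℤ) : (cz n j).vol = (2:ℝ) ^ ((-j : ℝ) * (n : ℝ)) := by
  show ((2:ℝ) ^ (-j)) ^ (n : ℕ) = _
  rw [← Real.rpow_intCast 2 (-j), ← Real.rpow_natCast ((2:ℝ) ^ ((-j : ℤ) : ℝ)) n,
    ← Real.rpow_mul (by norm_num)]
  push_cast
  ring_nf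

lemma vol_cz_zero : (cz n 0).vol = 1 := by
  rw [vol_cz]; norm_num

end GrowthAux

namespace GrowthAux
open DyadicCube
variable {n : ℕ}

lemma mem_vol {δ₁ δ₂ ω δ : ℝ} (hn : 0 < n) (hδ₁ : δ₁ ≤ δ) (hδ₂ : δ ≤ δ₂) (hω : 0 ≤ ω) :
    IsGrowthFunction n δ₁ δ₂ ω (fun Q => Q.vol ^ δ) := by
  refine ⟨fun Q => Real.rpow_pos_of_pos Q.vol_pos δ, 1, one_pos, fun Q R => ?_⟩
  have hvQ := Q.vol_pos; have hvR := R.vol_pos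
  have hb : (0:ℝ) < Q.vol / R.vol := div_pos hvQ hvR
  have h1 : (1:ℝ) ≤ (1 + Q.cdist R / max Q.len R.len) ^ ω := by
    refine le_trans (le_of_eq (Real.one_rpow ω).symm) (Real.rpow_le_rpow zero_le_one ?_ hω)
    have : 0 ≤ Q.cdist R / max Q.len R.len :=
      div_nonneg (Q.cdist_nonneg R) (le_trans Q.len_pos.le (le_max_left _ _))
    linarith
  simp only
  rw [← Real.div_rpow hvQ.le hvR.le]
  split_ifs with hl
  · have hle : Q.vol / R.vol ≤ 1 := by
      rw [div_le_one hvR]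
      exact pow_le_pow_left₀ Q.len_pos.le hl n
    have h2 : (Q.vol/R.vol)^δ ≤ (Q.vol/R.vol)^δ₁ :=
      Real.rpow_le_rpow_of_exponent_ge hb hle hδ₁
    have h3 : (0:ℝ) ≤ (Q.vol/R.vol)^δ₁ := (Real.rpow_pos_of_pos hb _).le
    nlinarith
  · have hle : 1 ≤ Q.vol / R.vol := by
      rw [le_div_iff₀ hvR, one_mul]
      exact (pow_lt_pow_left₀ (not_le.mp hl) R.len_pos.le hn.ne').le
    have h2 : (Q.vol/R.vol)^δ ≤ (Q.vol/R.vol)^δ₂ :=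
      Real.rpow_le_rpow_of_exponent_le hle hδ₂
    have h3 : (0:ℝ) ≤ (Q.vol/R.vol)^δ₂ := (Real.rpow_pos_of_pos hb _).le
    nlinarith

lemma nec_vol {δ₁ δ₂ ω δ : ℝ} (hn : 0 < n)
    (h : IsGrowthFunction n δ₁ δ₂ ω (fun Q => Q.vol ^ δ)) : δ₁ ≤ δ ∧ δ ≤ δ₂ := by
  obtain ⟨-, C, hC, h⟩ := h
  have key : ∀ j : ℤ, ((cz n j).vol) ^ δ ≤ C *
      (if (cz n j).len ≤ (cz n 0).len then ((cz n j).vol)^δ₁ else ((cz n j).vol)^δ₂) := by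
    intro j
    have := h (cz n j) (cz n 0)
    simpa [cdist_cz, vol_cz_zero, Real.one_rpow, mul_one] using this
  have hnR : (0:ℝ) < (n:ℝ) := by exact_mod_cast hn
  constructor
  · by_contra hlt
    push_neg at hlt
    set c := (n:ℝ) * (δ₁ - δ) with hc
    have hc0 : 0 < c := mul_pos hnR (by linarith)
    have hbgt : 1 < (2:ℝ) ^ c := (Real.one_lt_rpow_iff_of_pos two_pos).2 (Or.inl ⟨one_lt_two, hc0⟩)
    obtain ⟨m, hm⟩ := pow_unbounded_of_one_lt C hbgt
    have hkey := key (m : ℤ)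
    have hlen : (cz n (m:ℤ)).len ≤ (cz n 0).len := by
      rw [len_cz, len_cz]
      exact zpow_le_zpow_right₀ one_le_two (by omega)
    rw [if_pos hlen, vol_cz, ← Real.rpow_mul (by norm_num), ← Real.rpow_mul (by norm_num)] at hkey
    have hsplit : (2:ℝ) ^ ((-(m:ℤ):ℝ) * (n:ℝ) * δ)
        = (2:ℝ) ^ (c * m) * (2:ℝ) ^ ((-(m:ℤ):ℝ) * (n:ℝ) * δ₁) := by
      rw [← Real.rpow_add two_pos]
      congr 1
      push_cast [hc]
      ring
    rw [hsplit] at hkey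
    have hP : (0:ℝ) < (2:ℝ) ^ ((-(m:ℤ):ℝ) * (n:ℝ) * δ₁) := Real.rpow_pos_of_pos two_pos _
    have h4 : (2:ℝ) ^ (c * m) ≤ C := le_of_mul_le_mul_right (by linarith [hkey]) hP
    have h5 : (2:ℝ) ^ (c * m) = ((2:ℝ) ^ c) ^ m := by
      rw [Real.rpow_mul (by norm_num), Real.rpow_natCast]
    linarith [h5 ▸ h4, hm]
  · by_contra hlt
    push_neg at hlt
    set c := (n:ℝ) * (δ - δ₂) with hc
    have hc0 : 0 < c := mul_pos hnR (by linarith)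
    have hbgt : 1 < (2:ℝ) ^ c := (Real.one_lt_rpow_iff_of_pos two_pos).2 (Or.inl ⟨one_lt_two, hc0⟩)
    obtain ⟨m, hm⟩ := pow_unbounded_of_one_lt C hbgt
    have hkey := key (-((m:ℤ)+1))
    have hlen : ¬ ((cz n (-((m:ℤ)+1))).len ≤ (cz n 0).len) := by
      rw [len_cz, len_cz, not_le, neg_neg]
      exact zpow_lt_zpow_right₀ one_lt_two (by omega)
    rw [if_neg hlen, vol_cz, ← Real.rpow_mul (by norm_num), ← Real.rpow_mul (by norm_num)] at hkey
    push_cast [neg_neg] at hkey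
    have hsplit : (2:ℝ) ^ (((m:ℝ)+1) * (n:ℝ) * δ)
        = (2:ℝ) ^ (c * ((m:ℝ)+1)) * (2:ℝ) ^ (((m:ℝ)+1) * (n:ℝ) * δ₂) := by
      rw [← Real.rpow_add two_pos]
      congr 1
      push_cast [hc]
      ring
    rw [hsplit] at hkey
    have hP : (0:ℝ) < (2:ℝ) ^ (((m:ℝ)+1) * (n:ℝ) * δ₂) := Real.rpow_pos_of_pos two_pos _
    have h4 : (2:ℝ) ^ (c * ((m:ℝ)+1)) ≤ C := le_of_mul_le_mul_right (by linarith [hkey]) hP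
    have h5 : (2:ℝ) ^ (c * ((m:ℝ)+1)) = ((2:ℝ) ^ c) ^ (m+1) := by
      rw [Real.rpow_mul (by norm_num)]
      rw [show ((m:ℝ)+1) = ((m+1 : ℕ) : ℝ) by push_cast; ring, Real.rpow_natCast]
    have h6 : ((2:ℝ) ^ c) ^ m ≤ ((2:ℝ) ^ c) ^ (m+1) := pow_le_pow_right₀ hbgt.le (by omega)
    linarith [h5 ▸ h4, hm]
end GrowthAux

namespace GrowthAux
open DyadicCube
variable {n : ℕ}

noncomputable def gfun (n : ℕ) (δ₁ δ₂ ω : ℝ) (Q : DyadicCube n) : ℝ :=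
  Q.vol ^ δ₁ * (max Q.len 1) ^ ((n:ℝ)*(δ₂-δ₁)-ω) * (max Q.len 1 + nx Q) ^ ω

lemma gfun_pos (δ₁ δ₂ ω : ℝ) (Q : DyadicCube n) : 0 < gfun n δ₁ δ₂ ω Q := by
  have h1 := Q.vol_pos
  have h2 : (0:ℝ) < max Q.len 1 := lt_of_lt_of_le one_pos (le_max_right _ _)
  have h3 : (0:ℝ) < max Q.len 1 + nx Q := by linarith [nx_nonneg Q]
  unfold gfun
  positivity

lemma mem_gfun {δ₁ δ₂ ω : ℝ} (hω0 : 0 ≤ ω) (hω : ω ≤ (n:ℝ)*(δ₂-δ₁)) :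
    IsGrowthFunction n δ₁ δ₂ ω (gfun n δ₁ δ₂ ω) := by
  set e := (n:ℝ)*(δ₂-δ₁) - ω with he
  have he0 : 0 ≤ e := by linarith
  refine ⟨gfun_pos _ _ _, 1, one_pos, fun Q R => ?_⟩
  set lq := Q.len with hlq
  set lr := R.len with hlr
  set mq := max lq 1 with hmq
  set mr := max lr 1 with hmr
  set xq := nx Q with hxq
  set xr := nx R with hxr
  set d := Q.cdist R with hd
  set vq := Q.vol with hvq
  set vr := R.vol with hvr
  have hlq0 : 0 < lq := Q.len_pos
  have hlr0 : 0 < lr := R.len_pos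
  have hmq1 : (1:ℝ) ≤ mq := le_max_right _ _
  have hmr1 : (1:ℝ) ≤ mr := le_max_right _ _
  have hmq0 : (0:ℝ) < mq := lt_of_lt_of_le one_pos hmq1
  have hmr0 : (0:ℝ) < mr := lt_of_lt_of_le one_pos hmr1
  have hxq0 : 0 ≤ xq := nx_nonneg Q
  have hxr0 : 0 ≤ xr := nx_nonneg R
  have hd0 : 0 ≤ d := Q.cdist_nonneg R
  have hvq0 : 0 < vq := Q.vol_pos
  have hvr0 : 0 < vr := R.vol_pos
  have hxqd : xq ≤ xr + d := nx_le Q R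
  have hgr : 0 < gfun n δ₁ δ₂ ω R := gfun_pos _ _ _ _
  rw [div_le_iff₀ hgr]
  show vq ^ δ₁ * mq ^ e * (mq + xq) ^ ω ≤
    1 * (1 + d / max lq lr) ^ ω *
      (if lq ≤ lr then (vq / vr) ^ δ₁ else (vq / vr) ^ δ₂) *
      (vr ^ δ₁ * mr ^ e * (mr + xr) ^ ω)
  have hsplitv : (vq/vr) ^ δ₁ * vr ^ δ₁ = vq ^ δ₁ := by
    rw [Real.div_rpow hvq0.le hvr0.le, div_mul_cancel₀]
    exact (Real.rpow_pos_of_pos hvr0 δ₁).ne'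
  split_ifs with hl
  · -- small Q
    rw [max_eq_right hl]
    have hmm : mq ≤ mr := max_le_max hl le_rfl
    have hB0 : (0:ℝ) < 1 + d / lr := by positivity
    have hy : mq + xq ≤ (1 + d/lr) * (mr + xr) := by
      have h1 : (1:ℝ) ≤ (mr + xr) / lr := by
        rw [le_div_iff₀ hlr0, one_mul]
        calc lr ≤ mr := le_max_left _ _
        _ ≤ mr + xr := by linarith
      have h2 : d * 1 ≤ d * ((mr + xr)/lr) := mul_le_mul_of_nonneg_left h1 hd0
      have h3 : (1 + d/lr) * (mr + xr) = (mr + xr) + d * ((mr+xr)/lr) := by ring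
      linarith
    have h1 : mq ^ e ≤ mr ^ e := Real.rpow_le_rpow hmq0.le hmm he0
    have h2 : (mq + xq) ^ ω ≤ ((1 + d/lr) * (mr + xr)) ^ ω :=
      Real.rpow_le_rpow (by linarith) hy hω0
    have h2' : ((1 + d/lr) * (mr + xr)) ^ ω = (1 + d/lr) ^ ω * (mr + xr) ^ ω :=
      Real.mul_rpow hB0.le (by linarith)
    have main : mq ^ e * (mq + xq) ^ ω ≤ mr ^ e * ((1 + d/lr) ^ ω * (mr + xr) ^ ω) := by
      rw [← h2']
      exact mul_le_mul h1 h2 (Real.rpow_nonneg (by linarith) _) (Real.rpow_nonneg hmr0.le _)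
    calc vq ^ δ₁ * mq ^ e * (mq + xq) ^ ω
        = vq ^ δ₁ * (mq ^ e * (mq + xq) ^ ω) := by ring
      _ ≤ vq ^ δ₁ * (mr ^ e * ((1 + d/lr) ^ ω * (mr + xr) ^ ω)) :=
          mul_le_mul_of_nonneg_left main (Real.rpow_nonneg hvq0.le _)
      _ = 1 * (1 + d / lr) ^ ω * (vq / vr) ^ δ₁ * (vr ^ δ₁ * mr ^ e * (mr + xr) ^ ω) := by
          rw [show 1 * (1 + d / lr) ^ ω * (vq / vr) ^ δ₁ * (vr ^ δ₁ * mr ^ e * (mr + xr) ^ ω)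
              = ((vq/vr) ^ δ₁ * vr ^ δ₁) * ((1 + d / lr) ^ ω * mr ^ e * (mr + xr) ^ ω) from by ring,
            hsplitv]
          ring
  · -- large Q
    have hl' : lr < lq := not_le.mp hl
    rw [max_eq_left hl'.le]
    have hmm : mr ≤ mq := max_le_max hl'.le le_rfl
    have hB0 : (0:ℝ) < 1 + d / lq := by positivity
    have hlql : (0:ℝ) < lq / lr := div_pos hlq0 hlr0
    -- mq * lr ≤ lq * mr
    have hml : mq * lr ≤ lq * mr := by
      rcases le_total lq 1 with h1 | h1
      · rw [hmq, max_eq_right h1, hmr, max_eq_right (le_trans hl'.le h1)]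
        linarith
      · rcases le_total lr 1 with h2 | h2
        · rw [hmq, max_eq_left h1, hmr, max_eq_right h2]
          have := mul_le_mul_of_nonneg_left h2 hlq0.le
          linarith
        · exact le_of_eq (by rw [hmq, max_eq_left h1, hmr, max_eq_left h2])
    have hi : mq ≤ (lq/lr) * mr := by
      rw [div_mul_eq_mul_div, le_div_iff₀ hlr0]
      linarith
    have hii : mq + xq ≤ (lq/lr) * (1 + d/lq) * (mr + xr) := by
      have hexp : (lq/lr) * (1 + d/lq) * (mr + xr) = ((lq + d) * (mr + xr)) / lr := by
        field_simp
      rw [hexp, le_div_iff₀ hlr0]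
      have ha : xr * lr ≤ xr * lq := mul_le_mul_of_nonneg_left hl'.le hxr0
      have hb : d * lr ≤ d * mr := mul_le_mul_of_nonneg_left (le_max_left lr 1) hd0
      have hcq : xq * lr ≤ (xr + d) * lr := mul_le_mul_of_nonneg_right hxqd hlr0.le
      have hdxr : 0 ≤ d * xr := mul_nonneg hd0 hxr0
      linarith
    -- ratio of volumes
    have hvol : vq / vr = (lq/lr) ^ (n:ℕ) := by
      rw [hvq, hvr, hlq, hlr, div_pow]
      rfl
    have hratio : (vq/vr) ^ δ₂ * vr ^ δ₁ = vq ^ δ₁ * ((lq/lr) ^ e * (lq/lr) ^ ω) := by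
      have hstep1 : (vq/vr) ^ δ₂ = (vq/vr) ^ δ₁ * (vq/vr) ^ (δ₂ - δ₁) := by
        rw [← Real.rpow_add (div_pos hvq0 hvr0)]
        congr 1
        ring
      have hstep2 : (vq/vr) ^ (δ₂ - δ₁) = (lq/lr) ^ ((n:ℝ) * (δ₂ - δ₁)) := by
        rw [hvol, ← Real.rpow_natCast (lq/lr) n, ← Real.rpow_mul hlql.le]
      have hstep3 : (lq/lr) ^ ((n:ℝ) * (δ₂ - δ₁)) = (lq/lr) ^ e * (lq/lr) ^ ω := by
        rw [← Real.rpow_add hlql]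
        congr 1
        rw [he]
        ring
      calc (vq/vr) ^ δ₂ * vr ^ δ₁
          = ((vq/vr) ^ δ₁ * vr ^ δ₁) * (vq/vr) ^ (δ₂ - δ₁) := by rw [hstep1]; ring
        _ = vq ^ δ₁ * ((lq/lr) ^ e * (lq/lr) ^ ω) := by rw [hsplitv, hstep2, hstep3]
    have h1 : mq ^ e ≤ ((lq/lr) * mr) ^ e := Real.rpow_le_rpow hmq0.le hi he0
    have h2 : (mq + xq) ^ ω ≤ ((lq/lr) * (1 + d/lq) * (mr + xr)) ^ ω :=
      Real.rpow_le_rpow (by linarith) hii hω0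
    have hA : ((lq/lr) * mr) ^ e = (lq/lr) ^ e * mr ^ e := Real.mul_rpow hlql.le hmr0.le
    have hB : ((lq/lr) * (1 + d/lq) * (mr + xr)) ^ ω
        = (lq/lr) ^ ω * ((1 + d/lq) ^ ω * (mr + xr) ^ ω) := by
      rw [Real.mul_rpow (by positivity) (by linarith), Real.mul_rpow hlql.le hB0.le]
      ring
    have main : mq ^ e * (mq + xq) ^ ω
        ≤ ((lq/lr) ^ e * mr ^ e) * ((lq/lr) ^ ω * ((1 + d/lq) ^ ω * (mr + xr) ^ ω)) := by
      rw [← hA, ← hB]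
      exact mul_le_mul h1 h2 (Real.rpow_nonneg (by linarith) _)
        (Real.rpow_nonneg (by positivity) _)
    calc vq ^ δ₁ * mq ^ e * (mq + xq) ^ ω
        = vq ^ δ₁ * (mq ^ e * (mq + xq) ^ ω) := by ring
      _ ≤ vq ^ δ₁ * (((lq/lr) ^ e * mr ^ e) * ((lq/lr) ^ ω * ((1 + d/lq) ^ ω * (mr + xr) ^ ω))) :=
          mul_le_mul_of_nonneg_left main (Real.rpow_nonneg hvq0.le _)
      _ = 1 * (1 + d / lq) ^ ω * (vq / vr) ^ δ₂ * (vr ^ δ₁ * mr ^ e * (mr + xr) ^ ω) := by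
          rw [show 1 * (1 + d / lq) ^ ω * (vq / vr) ^ δ₂ * (vr ^ δ₁ * mr ^ e * (mr + xr) ^ ω)
              = ((vq/vr) ^ δ₂ * vr ^ δ₁) * ((1 + d / lq) ^ ω * mr ^ e * (mr + xr) ^ ω) from by ring,
            hratio]
          ring
end GrowthAux

namespace GrowthAux
open DyadicCube
variable {n : ℕ}

/-- test cube of generation 0 at position `t e₁` -/
def ct (n : ℕ) (hn : 0 < n) (t : ℕ) : DyadicCube n :=
  ⟨0, fun i => if i = ⟨0, hn⟩ then (t:ℤ) else 0⟩

lemma len_ct (hn : 0 < n) (t : ℕ) : (ct n hn t).len = 1 := by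
  show (2:ℝ) ^ (-(0:ℤ)) = 1
  norm_num

lemma vol_ct (hn : 0 < n) (t : ℕ) : (ct n hn t).vol = 1 := by
  unfold DyadicCube.vol
  rw [len_ct, one_pow]

lemma corner_ct (hn : 0 < n) (t : ℕ) (i : Fin n) :
    (ct n hn t).corner i = if i = ⟨0, hn⟩ then (t:ℝ) else 0 := by
  unfold DyadicCube.corner ct
  simp only
  rw [show (2:ℝ) ^ (-(0:ℤ)) = 1 by norm_num, one_mul]
  split <;> simp

lemma nx_ct (hn : 0 < n) (t : ℕ) : nx (ct n hn t) = t := by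
  unfold nx DyadicCube.cdist
  have hterm : ∀ i : Fin n, ((ct n hn t).corner i - (cz n 0).corner i) ^ 2
      = if i = ⟨0, hn⟩ then ((t:ℝ))^2 else 0 := by
    intro i
    rw [corner_cz, sub_zero, corner_ct]
    split <;> simp
  rw [Finset.sum_congr rfl fun i _ => hterm i, Finset.sum_ite_eq' Finset.univ]
  simp [Real.sqrt_sq]

lemma gfun_ct {δ₁ δ₂ ω : ℝ} (hn : 0 < n) (t : ℕ) :
    gfun n δ₁ δ₂ ω (ct n hn t) = (1 + (t:ℝ)) ^ ω := by
  unfold gfun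
  rw [vol_ct, len_ct, nx_ct]
  simp [Real.one_rpow]

lemma nx_cz_zero : nx (cz n 0) = 0 := cdist_cz 0 0

lemma len_cz_zero : (cz n 0).len = 1 := by
  show (2:ℝ) ^ (-(0:ℤ)) = 1
  norm_num

lemma gfun_cz0 {δ₁ δ₂ ω : ℝ} : gfun n δ₁ δ₂ ω (cz n 0) = 1 := by
  unfold gfun
  rw [vol_cz_zero, nx_cz_zero, len_cz_zero]
  simp [Real.one_rpow]

lemma nec_omega (hn : 0 < n) {δ₁ δ₂ ω α β γ : ℝ}
    (h : IsGrowthFunction n α β γ (gfun n δ₁ δ₂ ω)) : ω ≤ γ := by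
  obtain ⟨-, C, hC, h⟩ := h
  have key : ∀ t : ℕ, (1 + (t:ℝ)) ^ ω ≤ C * (1 + (t:ℝ)) ^ γ := by
    intro t
    have hkey := h (ct n hn t) (cz n 0)
    rw [gfun_ct, gfun_cz0, div_one] at hkey
    rw [if_pos (le_of_eq (by rw [len_ct, len_cz_zero]))] at hkey
    rw [show (ct n hn t).cdist (cz n 0) = (t:ℝ) from nx_ct hn t] at hkey
    rw [len_ct, len_cz_zero, max_self, div_one, vol_ct, vol_cz_zero, div_one,
      Real.one_rpow, mul_one] at hkey
    exact hkey
  by_contra hlt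
  push_neg at hlt
  set e' := ω - γ with he'
  have he'0 : 0 < e' := by linarith
  obtain ⟨N, hN⟩ := exists_nat_gt (C ^ (1/e'))
  have hkey := key N
  have h1N : (0:ℝ) < 1 + (N:ℝ) := by positivity
  have hsplit : (1+(N:ℝ))^ω = (1+(N:ℝ))^e' * (1+(N:ℝ))^γ := by
    rw [← Real.rpow_add h1N]
    congr 1
    rw [he']
    ring
  rw [hsplit] at hkey
  have hP : (0:ℝ) < (1+(N:ℝ))^γ := Real.rpow_pos_of_pos h1N _
  have h4 : (1+(N:ℝ))^e' ≤ C := le_of_mul_le_mul_right (by linarith) hP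
  have hCe : (C ^ (1/e')) ^ e' = C := by
    rw [← Real.rpow_mul hC.le, one_div_mul_cancel he'0.ne', Real.rpow_one]
  have h5 : C < (1+(N:ℝ))^e' := by
    calc C = (C^(1/e'))^e' := hCe.symm
    _ < (1+(N:ℝ))^e' := Real.rpow_lt_rpow (Real.rpow_nonneg hC.le _) (by linarith) he'0
  linarith
end GrowthAux

/-- If `0 ≤ ω ≤ n(δ₂ - δ₁)` and `0 ≤ ω̃ ≤ n(δ̃₂ - δ̃₁)`, then
`𝒢(δ₁, δ₂; ω) = 𝒢(δ̃₁, δ̃₂; ω̃)` if and only if `δ₁ = δ̃₁`, `δ₂ = δ̃₂` and `ω = ω̃`. -/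
theorem growth_class_eq_iff_params_eq (n : ℕ) (hn : 0 < n)
    (δ₁ δ₂ ω δ₁' δ₂' ω' : ℝ)
    (hω0 : 0 ≤ ω) (hω : ω ≤ (n : ℝ) * (δ₂ - δ₁))
    (hω0' : 0 ≤ ω') (hω' : ω' ≤ (n : ℝ) * (δ₂' - δ₁')) :
    ({υ : DyadicCube n → ℝ | IsGrowthFunction n δ₁ δ₂ ω υ} =
      {υ : DyadicCube n → ℝ | IsGrowthFunction n δ₁' δ₂' ω' υ}) ↔
    (δ₁ = δ₁' ∧ δ₂ = δ₂' ∧ ω = ω') := by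
  constructor
  · intro h
    have hiff : ∀ υ : DyadicCube n → ℝ,
        IsGrowthFunction n δ₁ δ₂ ω υ ↔ IsGrowthFunction n δ₁' δ₂' ω' υ := fun υ =>
      Set.ext_iff.1 h υ
    have hnR : (0:ℝ) < (n:ℝ) := by exact_mod_cast hn
    have hd : δ₁ ≤ δ₂ := by nlinarith
    have hd' : δ₁' ≤ δ₂' := by nlinarith
    have A1 := GrowthAux.nec_vol hn ((hiff _).1 (GrowthAux.mem_vol hn le_rfl hd hω0))
    have A2 := GrowthAux.nec_vol hn ((hiff _).1 (GrowthAux.mem_vol hn hd le_rfl hω0))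
    have B1 := GrowthAux.nec_vol hn ((hiff _).2 (GrowthAux.mem_vol hn le_rfl hd' hω0'))
    have B2 := GrowthAux.nec_vol hn ((hiff _).2 (GrowthAux.mem_vol hn hd' le_rfl hω0'))
    have C1 : ω ≤ ω' := GrowthAux.nec_omega hn ((hiff _).1 (GrowthAux.mem_gfun hω0 hω))
    have C2 : ω' ≤ ω := GrowthAux.nec_omega hn ((hiff _).2 (GrowthAux.mem_gfun hω0' hω'))
    exact ⟨le_antisymm B1.1 A1.1, le_antisymm A2.2 B2.2, le_antisymm C1 C2⟩
  · rintro ⟨rfl, rfl, rfl⟩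
    rfl
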